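/- arXiv:1509.01178 — 5 statements merged into one kernel-verified Lean document; each statement's English description precedes it below -/
import Mathlib

section
/- Suppose $U$ is an open subset of $\mathbf{R}^n$, $\mu$ is a Radon measure over $U$, $h : U \to \mathbf{R}$ is of class $C^1$, $A = \{x \in U : h(x) \geq 0\}$, and $\varepsilon > 0$. Then there exists a nonnegative function $g : U \to \mathbf{R}$ of class $C^1$ such that $\mu(A \setminus \{x : h(x) = g(x)\}) \leq \varepsilon$. -/
open MeasureTheory Set
open scoped Manifold ENNReal

theorem my_exhaustion {E : Type*} [NormedAddCommGroup E] [NormedSpace ℝ E]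
    [FiniteDimensional ℝ E] {U : Set E} (hU : IsOpen U) :
    ∃ K : ℕ → Set E, (∀ i, IsCompact (K i)) ∧ (∀ i, K i ⊆ U) ∧
      (∀ i, K i ⊆ interior (K (i+1))) ∧ U ⊆ ⋃ i, K i := by
  classical
  set ρ : E → ℝ := fun x => if Uᶜ.Nonempty then Metric.infDist x Uᶜ else 1 with hρ
  have ρcont : Continuous ρ := by
    by_cases hc : Uᶜ.Nonempty
    · simpa [hρ, hc] using Metric.continuous_infDist_pt Uᶜ
    · simp only [hρ, hc, if_false]; exact continuous_const
  refine ⟨fun i => Metric.closedBall 0 i ∩ ρ ⁻¹' (Set.Ici (1/(i+1))), fun i => ?_, fun i => ?_,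
    fun i => ?_, fun x hx => ?_⟩
  · apply Metric.isCompact_of_isClosed_isBounded
    · exact Metric.isClosed_closedBall.inter (isClosed_Ici.preimage ρcont)
    · exact Metric.isBounded_closedBall.subset inter_subset_left
  · rintro x ⟨-, hx2⟩
    by_cases hc : Uᶜ.Nonempty
    · by_contra hxU
      have : ρ x = 0 := by
        simp only [hρ, hc, if_true]
        exact Metric.infDist_zero_of_mem hxU
      have h2 : (1:ℝ)/(i+1) ≤ ρ x := hx2
      rw [this] at h2
      have : (0:ℝ) < 1/(i+1) := by positivity
      linarith
    · have : U = univ := by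
        rw [← compl_empty_iff]; exact not_nonempty_iff_eq_empty.mp hc
      simp [this]
  · intro x hx
    have hx1 : x ∈ Metric.closedBall (0:E) i := hx.1
    have hx2 : (1:ℝ)/(i+1) ≤ ρ x := hx.2
    have : x ∈ Metric.ball (0:E) (i+1) ∩ ρ ⁻¹' (Set.Ioi (1/(i+1+1))) := by
      constructor
      · exact lt_of_le_of_lt (Metric.mem_closedBall.mp hx1) (by exact_mod_cast by linarith)
      · refine lt_of_lt_of_le ?_ hx2
        rw [div_lt_div_iff₀ (by positivity) (by positivity)]
        linarith
    refine interior_maximal ?_ (Metric.isOpen_ball.inter (isOpen_Ioi.preimage ρcont)) this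
    rintro y ⟨hy1, hy2⟩
    refine ⟨Metric.ball_subset_closedBall (by exact_mod_cast hy1), ?_⟩
    simp only [mem_preimage, mem_Ici, mem_Ioi] at hy2 ⊢
    push_cast at hy2 ⊢
    linarith [hy2]
  · have hρx : 0 < ρ x := by
      by_cases hc : Uᶜ.Nonempty
      · simp only [hρ, hc, if_true]
        exact (IsClosed.notMem_iff_infDist_pos hU.isClosed_compl hc).mp (by simpa using hx)
      · simp [hρ, hc]
    obtain ⟨i, hi⟩ := exists_nat_gt (max ‖x‖ (1/ρ x))
    refine mem_iUnion.mpr ⟨i, ?_, ?_⟩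
    · simpa using le_of_lt (lt_of_le_of_lt (le_max_left _ _) hi)
    · have h1 : 1/ρ x < i := lt_of_le_of_lt (le_max_right _ _) hi
      have : 1/ρ x < (i:ℝ)+1 := by linarith
      simp only [mem_preimage, mem_Ici]
      rw [div_le_iff₀ (by positivity)]
      rw [div_lt_iff₀ hρx] at this
      linarith [mul_comm (ρ x) ((i:ℝ)+1)]

theorem my_partition' {E : Type*} [NormedAddCommGroup E] [NormedSpace ℝ E]
    [FiniteDimensional ℝ E] (K : ℕ → Set E) (hKc : ∀ i, IsCompact (K i))
    (hKint : ∀ i, K i ⊆ interior (K (i+1))) :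
    ∃ φ : ℕ → E → ℝ, (∀ i, ContDiff ℝ 1 (φ i)) ∧ (∀ i x, 0 ≤ φ i x) ∧
      (∀ i x, x ∉ interior (K (i+1)) → φ i x = 0) ∧
      (∀ i x, x ∈ K i → φ (i+1) x = 0) ∧
      (∀ m x, x ∈ K m → ∑ i ∈ Finset.range (m+1), φ i x = 1) := by
  classical
  have hmono : Monotone K := monotone_nat_of_le_succ fun i => (hKint i).trans interior_subset
  have H : ∀ i, ∃ ψ : E → ℝ, ContDiff ℝ 1 ψ ∧ EqOn ψ 0 (interior (K (i+1)))ᶜ ∧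
      EqOn ψ 1 (K i) ∧ ∀ x, ψ x ∈ Icc (0:ℝ) 1 := by
    intro i
    obtain ⟨f, h0, h1, h01⟩ := exists_contMDiffMap_zero_one_of_isClosed 𝓘(ℝ, E) (n := (⊤ : ℕ∞))
      isOpen_interior.isClosed_compl (hKc i).isClosed
      (Set.disjoint_left.mpr fun x hx hx' => hx (hKint i hx'))
    exact ⟨f, (contMDiff_iff_contDiff.mp f.contMDiff).of_le
      (by exact_mod_cast (le_top : (1:ℕ∞) ≤ ⊤)), h0, h1, h01⟩
  choose ψ hψs hψ0 hψ1 hψ01 using H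
  set φ : ℕ → E → ℝ := fun i => Nat.casesOn i (ψ 0) (fun j => fun x => ψ (j+1) x - ψ j x) with hφ
  have hsum : ∀ m x, ∑ i ∈ Finset.range (m+1), φ i x = ψ m x := by
    intro m x
    induction m with
    | zero => simp [hφ]
    | succ m ih => rw [Finset.sum_range_succ, ih]; simp [hφ]
  refine ⟨φ, fun i => ?_, fun i x => ?_, fun i x hx => ?_, fun i x hx => ?_, fun m x hx => ?_⟩
  · cases i with
    | zero => exact hψs 0
    | succ j => exact (hψs (j+1)).sub (hψs j)
  · cases i with
    | zero => exact (hψ01 0 x).1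
    | succ j =>
      by_cases hxK : x ∈ K (j+1)
      · have := hψ1 (j+1) hxK
        simp only [hφ]
        have h2 := (hψ01 j x).2
        simp only [Pi.one_apply] at this
        simp [this]; linarith
      · have hxint : x ∈ (interior (K (j+1)))ᶜ := fun hc => hxK (interior_subset hc)
        have := hψ0 j hxint
        simp only [Pi.zero_apply] at this
        simp only [hφ, this]
        simpa using (hψ01 (j+1) x).1
  · cases i with
    | zero => exact hψ0 0 hx
    | succ j =>
      have hx' : x ∈ (interior (K (j+1)))ᶜ := fun hc =>
        hx (interior_mono (hmono (by omega)) hc)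
      have e1 := hψ0 (j+1) hx
      have e2 := hψ0 j hx'
      simp only [Pi.zero_apply] at e1 e2
      simp [hφ, e1, e2]
  · have e1 := hψ1 (i+1) (hmono (by omega) hx)
    have e2 := hψ1 i hx
    simp only [Pi.one_apply] at e1 e2
    simp [hφ, e1, e2]
  · rw [hsum]
    have := hψ1 m hx
    simpa using this

theorem my_small_slab {E : Type*} [MeasurableSpace E] [TopologicalSpace E] [BorelSpace E]
    {U : Set E} (hU : IsOpen U) (μ : Measure E) {C : Set E} (hC : IsClosed C) (hCU : C ⊆ U)
    (hCfin : μ C ≠ ⊤) {h : E → ℝ} (hh : ContinuousOn h U) {ε' : ENNReal} (hε' : ε' ≠ 0) :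
    ∃ δ : ℝ, 0 < δ ∧ μ (C ∩ (U ∩ h ⁻¹' Set.Ioo 0 δ)) ≤ ε' := by
  set D : ℕ → Set E := fun k => C ∩ (U ∩ h ⁻¹' Set.Ioo 0 (1/(k+1))) with hD
  have hDm : ∀ k, NullMeasurableSet (D k) μ := by
    intro k
    exact (hC.measurableSet.inter
      ((hh.isOpen_inter_preimage hU isOpen_Ioo).measurableSet)).nullMeasurableSet
  have hanti : Antitone D := by
    intro k l hkl
    refine inter_subset_inter_right _ (inter_subset_inter_right _ (preimage_mono ?_))
    apply Set.Ioo_subset_Ioo le_rfl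
    apply div_le_div_of_nonneg_left (by norm_num) (by positivity)
    push_cast; exact_mod_cast (by exact_mod_cast Nat.add_le_add_right hkl 1 : (k:ℝ)+1 ≤ (l:ℝ)+1)
  have hiempty : (⋂ k, D k) = ∅ := by
    ext x
    simp only [mem_iInter, mem_empty_iff_false, iff_false]
    intro hall
    obtain ⟨-, -, h1, -⟩ := hall 0
    obtain ⟨m, hm⟩ := exists_nat_gt (1/h x)
    obtain ⟨-, -, -, h2⟩ := hall m
    have hpos : 0 < h x := h1
    rw [div_lt_iff₀ hpos] at hm
    rw [lt_div_iff₀ (by positivity)] at h2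
    nlinarith
  have htend : Filter.Tendsto (μ ∘ D) Filter.atTop (nhds (μ (⋂ k, D k))) :=
    tendsto_measure_iInter_atTop hDm hanti
      ⟨0, ne_top_of_le_ne_top hCfin (measure_mono inter_subset_left)⟩
  rw [hiempty, measure_empty] at htend
  have := htend.eventually_lt_const (lt_of_le_of_ne (zero_le (a := ε')) (Ne.symm hε'))
  obtain ⟨k, hk⟩ := this.exists
  exact ⟨1/(k+1), by positivity, le_of_lt hk⟩

/-- approximation of a `C¹` function by a nonnegative `C¹` function agreeing with it
off a set of small measure within `{x : h x ≥ 0}`. -/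
theorem approx_nonneg_C1 {n : ℕ} (U : Set (EuclideanSpace ℝ (Fin n))) (hU : IsOpen U)
    (μ : Measure (EuclideanSpace ℝ (Fin n)))
    (hrad : ∀ K : Set (EuclideanSpace ℝ (Fin n)), K ⊆ U → IsCompact K → μ K < ⊤)
    (h : EuclideanSpace ℝ (Fin n) → ℝ) (hh : ContDiffOn ℝ 1 h U)
    (ε : ENNReal) (hε : 0 < ε) :
    ∃ g : EuclideanSpace ℝ (Fin n) → ℝ, ContDiffOn ℝ 1 g U ∧ (∀ x ∈ U, 0 ≤ g x) ∧
      μ (({x ∈ U | 0 ≤ h x}) \ {x | h x = g x}) ≤ ε := by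
  classical
  obtain ⟨K, hKc, hKU, hKint, hKcover⟩ := my_exhaustion hU
  have hmono : Monotone K := monotone_nat_of_le_succ fun i => (hKint i).trans interior_subset
  obtain ⟨φ, hφs, hφnn, hφout, hφin, hφsum⟩ := my_partition' K hKc hKint
  -- choose δ i
  have hεne : ∀ i : ℕ, (ε/2 * 2⁻¹^i : ENNReal) ≠ 0 := by
    intro i
    apply mul_ne_zero
    · simp [ENNReal.div_eq_zero_iff, hε.ne']
    · exact pow_ne_zero i (by norm_num)
  have hδex : ∀ i : ℕ, ∃ δ : ℝ, 0 < δ ∧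
      μ (K (i+1) ∩ (U ∩ h ⁻¹' Set.Ioo 0 δ)) ≤ ε/2 * 2⁻¹^i := by
    intro i
    exact my_small_slab hU μ (hKc (i+1)).isClosed (hKU (i+1))
      (hrad _ (hKU (i+1)) (hKc (i+1))).ne hh.continuousOn (hεne i)
  choose δ hδpos hδμ using hδex
  -- the modified functions
  set G : ℕ → EuclideanSpace ℝ (Fin n) → ℝ := fun i x => h x * Real.smoothTransition (h x / δ i) with hG
  have hσ : ContDiff ℝ 1 Real.smoothTransition :=
    (Real.smoothTransition.contDiff (n := ⊤)).of_le (by exact_mod_cast (le_top : (1:ℕ∞) ≤ ⊤))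
  have hGsm : ∀ i, ContDiffOn ℝ 1 (G i) U := by
    intro i
    exact hh.mul (hσ.comp_contDiffOn (hh.div_const _))
  have hGnn : ∀ i x, 0 ≤ G i x := by
    intro i x
    rcases le_or_gt (h x) 0 with hx | hx
    · have : Real.smoothTransition (h x / δ i) = 0 :=
        Real.smoothTransition.zero_of_nonpos (div_nonpos_iff.mpr (Or.inr ⟨hx, (hδpos i).le⟩))
      simp [hG, this]
    · exact mul_nonneg hx.le (Real.smoothTransition.nonneg _)
  have hGeq1 : ∀ i x, δ i ≤ h x → G i x = h x := by
    intro i x hx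
    have : Real.smoothTransition (h x / δ i) = 1 :=
      Real.smoothTransition.one_of_one_le ((one_le_div (hδpos i)).mpr hx)
    simp [hG, this]
  have hGeq0 : ∀ i x, h x = 0 → G i x = h x := by
    intro i x hx; simp [hG, hx]
  -- the function g
  set g : EuclideanSpace ℝ (Fin n) → ℝ := fun x => ∑ᶠ i, φ i x * G i x with hg
  -- support control
  have hφfin : ∀ m x, x ∈ K m → ∀ i, m + 1 ≤ i → φ i x = 0 := by
    intro m x hx i hi
    obtain ⟨j, rfl⟩ : ∃ j, i = j + 1 := ⟨i - 1, by omega⟩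
    exact hφin j x (hmono (by omega) hx)
  have hsupp : ∀ m x, x ∈ K m →
      (Function.support fun i => φ i x * G i x) ⊆ ↑(Finset.range (m+1)) := by
    intro m x hx i hi
    simp only [Finset.coe_range, mem_Iio]
    by_contra hcon
    refine hi ?_
    show φ i x * G i x = 0
    rw [hφfin m x hx i (by omega)]; ring
  have hgloc : ∀ m x, x ∈ K m → g x = ∑ i ∈ Finset.range (m+1), φ i x * G i x := by
    intro m x hx
    exact finsum_eq_sum_of_support_subset _ (hsupp m x hx)
  -- smoothness of g
  have hgsm : ContDiffOn ℝ 1 g U := by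
    intro x hx
    obtain ⟨m, hm⟩ := mem_iUnion.mp (hKcover hx)
    have hxV : x ∈ interior (K (m+1)) := hKint m hm
    have hVU : interior (K (m+1)) ⊆ U := interior_subset.trans (hKU (m+1))
    have hF : ContDiffOn ℝ 1 (fun y => ∑ i ∈ Finset.range (m+2), φ i y * G i y) U := by
      apply ContDiffOn.sum
      intro i _
      exact ((hφs i).contDiffOn).mul (hGsm i)
    have hFx : ContDiffAt ℝ 1 (fun y => ∑ i ∈ Finset.range (m+2), φ i y * G i y) x :=
      hF.contDiffAt (hU.mem_nhds (hVU hxV))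
    have heq : g =ᶠ[nhds x] fun y => ∑ i ∈ Finset.range (m+2), φ i y * G i y := by
      filter_upwards [isOpen_interior.mem_nhds hxV] with y hy
      exact hgloc (m+1) y (interior_subset hy)
    exact (hFx.congr_of_eventuallyEq heq).contDiffWithinAt
  -- nonnegativity
  have hgnn : ∀ x, 0 ≤ g x := by
    intro x
    exact finsum_nonneg fun i => mul_nonneg (hφnn i x) (hGnn i x)
  -- pointwise equality where thresholds are met
  have hkey : ∀ x ∈ U, 0 ≤ h x → (∀ i, φ i x ≠ 0 → δ i ≤ h x ∨ h x = 0) → g x = h x := by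
    intro x hxU hx0 hthr
    obtain ⟨m, hm⟩ := mem_iUnion.mp (hKcover hxU)
    have hterm : ∀ i, φ i x * G i x = φ i x * h x := by
      intro i
      by_cases hphi : φ i x = 0
      · simp [hphi]
      · rcases hthr i hphi with hd | h0
        · rw [hGeq1 i x hd]
        · rw [hGeq0 i x h0]
    calc g x = ∑ᶠ i, φ i x * h x := finsum_congr hterm
      _ = ∑ i ∈ Finset.range (m+1), φ i x * h x := by
          apply finsum_eq_sum_of_support_subset
          intro i hi
          simp only [Finset.coe_range, mem_Iio]
          by_contra hcon
          refine hi ?_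
          show φ i x * h x = 0
          rw [hφfin m x hm i (by omega)]; ring
      _ = (∑ i ∈ Finset.range (m+1), φ i x) * h x := by rw [Finset.sum_mul]
      _ = h x := by rw [hφsum m x hm, one_mul]
  -- bad set inclusion
  have hbad : ({x ∈ U | 0 ≤ h x}) \ {x | h x = g x} ⊆
      ⋃ i, K (i+1) ∩ (U ∩ h ⁻¹' Set.Ioo 0 (δ i)) := by
    rintro x ⟨⟨hxU, hx0⟩, hxne⟩
    simp only [mem_setOf_eq] at hxne
    by_contra hcon
    simp only [mem_iUnion, not_exists] at hcon
    apply hxne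
    refine (hkey x hxU hx0 ?_).symm
    intro i hphi
    by_contra hcon2
    push_neg at hcon2
    obtain ⟨hlt, hne0⟩ := hcon2
    have hxK : x ∈ K (i+1) := by
      by_contra hxK
      exact hphi (hφout i x (fun hc => hxK (interior_subset hc)))
    exact hcon i ⟨hxK, hxU, lt_of_le_of_ne hx0 (Ne.symm hne0), hlt⟩
  -- measure estimate
  refine ⟨g, hgsm, fun x _ => hgnn x, ?_⟩
  calc μ (({x ∈ U | 0 ≤ h x}) \ {x | h x = g x})
      ≤ μ (⋃ i, K (i+1) ∩ (U ∩ h ⁻¹' Set.Ioo 0 (δ i))) := measure_mono hbad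
    _ ≤ ∑' i, μ (K (i+1) ∩ (U ∩ h ⁻¹' Set.Ioo 0 (δ i))) := measure_iUnion_le _
    _ ≤ ∑' i : ℕ, ε/2 * 2⁻¹^i := ENNReal.tsum_le_tsum hδμ
    _ = ε/2 * ∑' i : ℕ, 2⁻¹^i := ENNReal.tsum_mul_left
    _ = ε/2 * 2 := by
        rw [ENNReal.tsum_geometric, ENNReal.one_sub_inv_two, inv_inv]
    _ = ε := by
        rw [ENNReal.div_mul_cancel (by norm_num) (by norm_num)]
end

section
/- Suppose $U$ is an open subset of $\mathbf{R}^n$, $\mu$ is a Radon measure over $U$, $Y$ is a finite dimensional normed vector space, and $f_i$ is a sequence of $\mu$-measurable $Y$-valued functions on $U$ such that: whenever $X$ is a $\mu$-measurable set with $\mu(X) < \infty$ and $\varepsilon > 0$, there exists $\kappa < \infty$ such that for each $i$ there exists a subset $A$ of $X$ with $\mu(X \setminus A) \leq \varepsilon$, $\sup_{x \in A} |f_i(x)| \leq \kappa$, and $\mathrm{Lip}(f_i|A) \leq \kappa$. Then there exist a $\mu$-measurable $Y$-valued function $f$ and a subsequence of $f_i$ which converges to $f$ in $\mu \restriction K$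 measure for every compact subset $K$ of $U$. -/
/-!
Exhaust `U` by compact sets `K r`. On `K r` each `f i` agrees, off a set of measure `2⁻¹ ^ r`,
with a globally Lipschitz extension `h r i` whose Lipschitz constant and pointwise values are
bounded independently of `i`. A diagonal argument over a countable dense set, together with
equicontinuity, yields one subsequence `φ` along which every `h r (φ j)` converges pointwise, to
`u r` say. Then `f (φ j)` stays within `2 * 2⁻¹ ^ r` of `u r` in measure on `K m` (`m ≤ r`), so
consecutive `u r` are close in measure at a summable rate: by Borel–Cantelli `u r` converges a.e.
to some `g`, and `f (φ j) → g` in measure on every `K m`.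
-/

open MeasureTheory Metric Set Filter Topology
open scoped ENNReal NNReal

theorem IsOpen.exists_compact_exhaustion {X : Type*} [TopologicalSpace X] [LocallyCompactSpace X]
    [SecondCountableTopology X] {U : Set X} (hU : IsOpen U) :
    ∃ K : ℕ → Set X, (∀ m, IsCompact (K m)) ∧ (∀ m, K m ⊆ U) ∧ Monotone K ∧
      ∀ C ⊆ U, IsCompact C → ∃ m, C ⊆ K m := by
  have : LocallyCompactSpace U := hU.locallyCompactSpace
  let K' := CompactExhaustion.choice U
  refine ⟨fun m => (↑) '' K' m, fun m => (K'.isCompact m).image continuous_subtype_val,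
    fun m => Subtype.coe_image_subset U _, fun m m' h => image_mono (K'.subset h),
    fun C hCU hC => ?_⟩
  obtain ⟨m, hm⟩ := K'.exists_superset_of_isCompact
    (Subtype.isCompact_iff.2 (by rwa [Subtype.image_preimage_coe, inter_eq_right.2 hCU]) :
      IsCompact ((↑) ⁻¹' C : Set U))
  exact ⟨m, fun x hx => ⟨⟨x, hCU hx⟩, hm hx, rfl⟩⟩

theorem LipschitzOnWith.exists_lipschitzWith_extension_norm_le {X Y : Type*} [PseudoMetricSpace X]
    [NormedAddCommGroup Y] [NormedSpace ℝ Y] [FiniteDimensional ℝ Y] {f : X → Y} {s : Set X}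
    {K M : ℝ≥0} {c : X} {R : ℝ} (hf : LipschitzOnWith K f s) (hfM : ∀ x ∈ s, ‖f x‖ ≤ M)
    (hs : s ⊆ closedBall c R) (hR : 0 ≤ R) :
    ∃ g : X → Y, LipschitzWith (lipschitzExtensionConstant Y * K) g ∧ EqOn f g s ∧
      ∀ x, ‖g x‖ ≤ M + lipschitzExtensionConstant Y * K * (dist x c + R) := by
  rcases s.eq_empty_or_nonempty with rfl | ⟨a, ha⟩
  · refine ⟨0, LipschitzWith.const' 0, fun _ => False.elim, fun x => ?_⟩
    simp only [Pi.zero_apply, norm_zero]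
    positivity
  obtain ⟨g, hg, hfg⟩ := hf.extend_finite_dimension
  refine ⟨g, hg, hfg, fun x => ?_⟩
  calc ‖g x‖ ≤ ‖g a‖ + dist (g x) (g a) := by
        simpa [dist_eq_norm] using norm_le_norm_add_norm_sub' (g x) (g a)
    _ ≤ M + lipschitzExtensionConstant Y * K * dist x a := by
        gcongr
        · exact hfg ha ▸ hfM a ha
        · exact hg.dist_le_mul x a
    _ ≤ M + lipschitzExtensionConstant Y * K * (dist x c + R) := by
        gcongr
        exact (dist_triangle_right x a c).trans (by gcongr; exact hs ha)

theorem cauchySeq_of_lipschitzWith_of_dense {X Y : Type*} [PseudoMetricSpace X]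
    [PseudoMetricSpace Y] {F : ℕ → X → Y} {C : ℝ≥0} (hF : ∀ j, LipschitzWith C (F j))
    {D : Set X} (hD : Dense D) (hFD : ∀ d ∈ D, CauchySeq fun j => F j d) (x : X) :
    CauchySeq fun j => F j x := by
  rw [Metric.cauchySeq_iff]
  intro ε hε
  obtain ⟨d, hdD, hxd⟩ := hD.exists_dist_lt x (show 0 < ε / (3 * (C + 1)) by positivity)
  obtain ⟨N, hN⟩ := Metric.cauchySeq_iff.1 (hFD d hdD) (ε / 3) (by positivity)
  have hCd : C * dist x d ≤ ε / 3 := by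
    calc C * dist x d ≤ (C + 1) * (ε / (3 * (C + 1))) := by gcongr; linarith
      _ = ε / 3 := by field_simp
  refine ⟨N, fun i hi j hj => ?_⟩
  calc dist (F i x) (F j x)
      ≤ dist (F i x) (F i d) + dist (F i d) (F j d) + dist (F j d) (F j x) := dist_triangle4 ..
    _ ≤ C * dist x d + dist (F i d) (F j d) + C * dist x d := by
      gcongr
      · exact (hF i).dist_le_mul x d
      · exact dist_comm (F j d) (F j x) ▸ (hF j).dist_le_mul x d
    _ < ε := by linarith [hN i hi j hj]

theorem exists_subseq_tendsto_of_lipschitzWith {ι X Y : Type*} [Countable ι]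
    [PseudoMetricSpace X] [TopologicalSpace.SeparableSpace X] [PseudoMetricSpace Y] [ProperSpace Y]
    {F : ι → ℕ → X → Y} {C : ι → ℝ≥0} (hF : ∀ r i, LipschitzWith (C r) (F r i))
    (hbdd : ∀ r x, Bornology.IsBounded (range fun i => F r i x)) :
    ∃ φ : ℕ → ℕ, StrictMono φ ∧ ∀ r x, ∃ y, Tendsto (fun j => F r (φ j) x) atTop (𝓝 y) := by
  obtain ⟨D, hDc, hD⟩ := TopologicalSpace.exists_countable_dense X
  have : Countable D := hDc.to_subtype
  obtain ⟨_, -, φ, hφ, hlim⟩ :=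
    (isCompact_univ_pi fun q : ι × D => (hbdd q.1 q.2).isCompact_closure).tendsto_subseq
      (x := fun i q => F q.1 i q.2) fun i => mem_univ_pi.2 fun q => subset_closure ⟨i, rfl⟩
  refine ⟨φ, hφ, fun r x => cauchySeq_tendsto_of_complete ?_⟩
  refine cauchySeq_of_lipschitzWith_of_dense (fun j => hF r (φ j)) hD (fun d hd => ?_) x
  exact (tendsto_pi_nhds.1 hlim (r, ⟨d, hd⟩)).cauchySeq

section ConvergenceInMeasure

variable {α ι E : Type*} [MeasurableSpace α] {ν : Measure α} [PseudoMetricSpace E] {l : Filter ι}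

theorem measure_setOf_le_dist_le_add (f g h : α → E) (t : ℝ) :
    ν {x | t ≤ dist (f x) (h x)} ≤
      ν {x | t / 2 ≤ dist (f x) (g x)} + ν {x | t / 2 ≤ dist (g x) (h x)} := by
  refine (measure_mono fun x (hx : t ≤ dist (f x) (h x)) => ?_).trans (measure_union_le _ _)
  by_contra! hlt
  simp only [mem_union, mem_ofPred_eq, not_or, not_le] at hlt
  linarith [dist_triangle (f x) (g x) (h x)]

theorem eventually_measure_setOf_le_dist_le_of_eqOn {F G : ι → α → E} {w : α → E}
    {A : ι → Set α} {δ η : ℝ≥0∞} (hFG : ∀ j, EqOn (F j) (G j) (A j)) (hA : ∀ j, ν (A j)ᶜ ≤ δ)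
    (hG : TendstoInMeasure ν G l w) {t : ℝ} (ht : 0 < t) (hη : 0 < η) :
    ∀ᶠ j in l, ν {x | t ≤ dist (F j x) (w x)} ≤ δ + η := by
  filter_upwards [ENNReal.tendsto_nhds_zero.1 (tendstoInMeasure_iff_dist.1 hG t ht) η hη]
    with j hj
  refine (measure_mono fun x (hx : t ≤ dist (F j x) (w x)) => ?_).trans
    ((measure_union_le _ _).trans (add_le_add (hA j) hj))
  by_cases hxA : x ∈ A j
  · exact Or.inr (show t ≤ dist (G j x) (w x) from hFG j hxA ▸ hx)
  · exact Or.inl hxA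

theorem tendstoInMeasure_of_forall_eventually_measure_le {F : ι → α → E} {u : ℕ → α → E}
    {g : α → E} {δ : ℕ → ℝ≥0∞} (hδ : Tendsto δ atTop (𝓝 0)) (hu : TendstoInMeasure ν u atTop g)
    (hFu : ∀ r, ∀ t > 0, ∀ᶠ j in l, ν {x | t ≤ dist (F j x) (u r x)} ≤ δ r) :
    TendstoInMeasure ν F l g := by
  refine tendstoInMeasure_iff_dist.2 fun t ht => ENNReal.tendsto_nhds_zero.2 fun η hη => ?_
  have hη2 : 0 < η / 2 := ENNReal.half_pos hη.ne'
  obtain ⟨r, hδr, hur⟩ := ((ENNReal.tendsto_nhds_zero.1 hδ _ hη2).and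
    (ENNReal.tendsto_nhds_zero.1 (tendstoInMeasure_iff_dist.1 hu (t / 2) (by positivity)) _
      hη2)).exists
  filter_upwards [hFu r (t / 2) (by positivity)] with j hj
  calc ν {x | t ≤ dist (F j x) (g x)}
      ≤ ν {x | t / 2 ≤ dist (F j x) (u r x)} + ν {x | t / 2 ≤ dist (u r x) (g x)} :=
        measure_setOf_le_dist_le_add _ _ _ t
    _ ≤ η / 2 + η / 2 := add_le_add (hj.trans hδr) hur
    _ = η := ENNReal.add_halves η

theorem ae_exists_tendsto_of_forall_eventually_measure_le [CompleteSpace E] [l.NeBot]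
    {F : ι → α → E} {u : ℕ → α → E} {δ : ℕ → ℝ≥0∞} (hδ : ∑' r, δ r ≠ ∞)
    (hFu : ∀ r, ∀ t > 0, ∀ᶠ j in l, ν {x | t ≤ dist (F j x) (u r x)} ≤ δ r) :
    ∀ᵐ x ∂ν, ∃ y, Tendsto (fun r => u r x) atTop (𝓝 y) := by
  set S : ℕ → Set α := fun r => {x | (2⁻¹ : ℝ) ^ r ≤ dist (u r x) (u (r + 1) x)}
  have hS : ∀ r, ν (S r) ≤ δ r + δ (r + 1) := fun r => by
    obtain ⟨j, hj, hj'⟩ := ((hFu r ((2⁻¹ : ℝ) ^ r / 2) (by positivity)).and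
      (hFu (r + 1) ((2⁻¹ : ℝ) ^ r / 2) (by positivity))).exists
    calc ν (S r)
        ≤ ν {x | (2⁻¹ : ℝ) ^ r / 2 ≤ dist (u r x) (F j x)} +
            ν {x | (2⁻¹ : ℝ) ^ r / 2 ≤ dist (F j x) (u (r + 1) x)} :=
          measure_setOf_le_dist_le_add _ _ _ _
      _ ≤ δ r + δ (r + 1) := by
          simp only [dist_comm (u r _)]
          exact add_le_add hj hj'
  have hSsum : ∑' r, ν (S r) ≠ ∞ := by
    refine ne_top_of_le_ne_top ?_ (ENNReal.tsum_le_tsum hS)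
    rw [ENNReal.tsum_add]
    exact ENNReal.add_ne_top.2 ⟨hδ, ne_top_of_le_ne_top hδ
      (ENNReal.tsum_comp_le_tsum_of_injective (add_left_injective 1) δ)⟩
  filter_upwards [ae_eventually_notMem hSsum] with x hx
  refine cauchySeq_tendsto_of_complete (cauchySeq_of_summable_dist ?_)
  refine Summable.of_norm_bounded_eventually_nat
    (summable_geometric_of_lt_one (by norm_num) (by norm_num : (2⁻¹ : ℝ) < 1)) ?_
  filter_upwards [hx] with r hr
  rw [Real.norm_of_nonneg dist_nonneg]
  exact (not_le.1 hr).le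

theorem TendstoInMeasure.tendsto_measure_inter_lt_norm_sub {E' : Type*} [SeminormedAddCommGroup E']
    {F : ι → α → E'} {g : α → E'} {s C : Set α} (h : TendstoInMeasure (ν.restrict s) F l g)
    (hCs : C ⊆ s) {t : ℝ} (ht : 0 < t) :
    Tendsto (fun j => ν (C ∩ {x | t < ‖F j x - g x‖})) l (𝓝 0) := by
  refine tendsto_of_tendsto_of_tendsto_of_le_of_le tendsto_const_nhds
    (tendstoInMeasure_iff_norm.1 h t ht) (fun _ => zero_le) fun j => ?_
  calc ν (C ∩ {x | t < ‖F j x - g x‖}) ≤ ν ({x | t ≤ ‖F j x - g x‖} ∩ s) :=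
        measure_mono fun x hx => ⟨(show t < ‖F j x - g x‖ from hx.2).le, hCs hx.1⟩
    _ ≤ ν.restrict s {x | t ≤ ‖F j x - g x‖} := Measure.le_restrict_apply _ _

theorem exists_tendstoInMeasure_restrict_of_forall_eventually_measure_le [CompleteSpace E]
    [Nonempty E] [l.NeBot] {K : ℕ → Set α} (hK : ∀ m, ν (K m) ≠ ∞) {F : ι → α → E} {u : ℕ → α → E}
    (hu : ∀ r, StronglyMeasurable (u r)) {δ : ℕ → ℝ≥0∞} (hδ : ∑' r, δ r ≠ ∞)
    (hFu : ∀ m r, m ≤ r → ∀ t > 0,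
      ∀ᶠ j in l, ν.restrict (K m) {x | t ≤ dist (F j x) (u r x)} ≤ δ r) :
    ∃ g : α → E, AEStronglyMeasurable g (ν.restrict (⋃ m, K m)) ∧
      ∀ m, TendstoInMeasure (ν.restrict (K m)) F l g := by
  -- On `K m` the hypothesis only controls `u r` for `r ≥ m`, hence the shift by `m`.
  have hδ_shift : ∀ m, ∑' r, δ (r + m) ≠ ∞ := fun m =>
    ne_top_of_le_ne_top hδ (ENNReal.tsum_comp_le_tsum_of_injective (add_left_injective m) δ)
  set g : α → E := fun x => limUnder atTop fun r => u r x
  have hg : ∀ m, ∀ᵐ x ∂ν.restrict (K m), Tendsto (fun r => u r x) atTop (𝓝 (g x)) := by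
    intro m
    filter_upwards [ae_exists_tendsto_of_forall_eventually_measure_le (hδ_shift m)
      fun r => hFu m (r + m) (Nat.le_add_left m r)] with x ⟨y, hy⟩
    exact tendsto_nhds_limUnder ⟨y, (tendsto_add_atTop_iff_nat (f := fun r => u r x) m).1 hy⟩
  refine ⟨g, aestronglyMeasurable_of_tendsto_ae atTop (fun r => (hu r).aestronglyMeasurable)
    ((ae_restrict_iUnion_iff _ _).2 hg), fun m => ?_⟩
  have : IsFiniteMeasure (ν.restrict (K m)) := isFiniteMeasure_restrict.2 (hK m)
  refine tendstoInMeasure_of_forall_eventually_measure_le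
    (ENNReal.tendsto_atTop_zero_of_tsum_ne_top (hδ_shift m))
    (tendstoInMeasure_of_tendsto_ae (fun r => (hu (r + m)).aestronglyMeasurable) ?_)
    fun r => hFu m (r + m) (Nat.le_add_left m r)
  filter_upwards [hg m] with x hx
  exact (tendsto_add_atTop_iff_nat m).2 hx

end ConvergenceInMeasure

section LipschitzApproximation

variable {X Y : Type*} [PseudoMetricSpace X] [Nonempty X] [TopologicalSpace.SeparableSpace X]
  [MeasurableSpace X] [OpensMeasurableSpace X] [NormedAddCommGroup Y] [NormedSpace ℝ Y]
  [FiniteDimensional ℝ Y] {μ : Measure X} {K : ℕ → Set X} {f : ℕ → X → Y}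

theorem exists_subseq_eventually_measure_le_dist_le (hKmono : Monotone K)
    (hKb : ∀ r, Bornology.IsBounded (K r)) (hKm : ∀ r, MeasurableSet (K r))
    (hKμ : ∀ r, μ (K r) ≠ ∞)
    (hf : ∀ r, ∃ κ : ℝ≥0, ∀ i, ∃ A ⊆ K r, μ (K r \ A) ≤ 2⁻¹ ^ r ∧
      (∀ x ∈ A, ‖f i x‖ ≤ κ) ∧ LipschitzOnWith κ (f i) A) :
    ∃ φ : ℕ → ℕ, StrictMono φ ∧ ∃ u : ℕ → X → Y, (∀ r, StronglyMeasurable (u r)) ∧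
      ∀ m r, m ≤ r → ∀ t > 0, ∀ᶠ j in atTop,
        μ.restrict (K m) {x | t ≤ dist (f (φ j) x) (u r x)} ≤ 2⁻¹ ^ r + 2⁻¹ ^ r := by
  obtain ⟨c⟩ := ‹Nonempty X›
  choose κ A hAK hAμ hAbd hAlip using hf
  choose R hR0 hR using fun r => (hKb r).subset_closedBall_lt 0 c
  choose h hlip hfh hbd using fun r i => (hAlip r i).exists_lipschitzWith_extension_norm_le
    (hAbd r i) ((hAK r i).trans (hR r)) (hR0 r).le
  have hbdd : ∀ r x, Bornology.IsBounded (range fun i => h r i x) := fun r x =>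
    isBounded_iff_forall_norm_le.2 ⟨_, forall_mem_range.2 (hbd r · x)⟩
  obtain ⟨φ, hφ, hconv⟩ := exists_subseq_tendsto_of_lipschitzWith hlip hbdd
  choose u hu using hconv
  refine ⟨φ, hφ, u, fun r => stronglyMeasurable_of_tendsto atTop
    (fun j => (hlip r (φ j)).continuous.stronglyMeasurable) (tendsto_pi_nhds.2 (hu r)),
    fun m r hmr t ht => ?_⟩
  have : IsFiniteMeasure (μ.restrict (K m)) := isFiniteMeasure_restrict.2 (hKμ m)
  refine eventually_measure_setOf_le_dist_le_of_eqOn (fun j => hfh r (φ j)) (fun j => ?_)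
    (tendstoInMeasure_of_tendsto_ae (fun j => (hlip r (φ j)).continuous.aestronglyMeasurable)
      (ae_of_all _ (hu r))) ht (ENNReal.pow_pos (by norm_num) r)
  rw [Measure.restrict_apply' (hKm m)]
  refine (measure_mono ?_).trans (hAμ r (φ j))
  exact fun x hx => ⟨hKmono hmr hx.2, hx.1⟩

theorem exists_subseq_tendstoInMeasure_restrict (hKmono : Monotone K)
    (hKb : ∀ r, Bornology.IsBounded (K r)) (hKm : ∀ r, MeasurableSet (K r))
    (hKμ : ∀ r, μ (K r) ≠ ∞)
    (hf : ∀ r, ∃ κ : ℝ≥0, ∀ i, ∃ A ⊆ K r, μ (K r \ A) ≤ 2⁻¹ ^ r ∧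
      (∀ x ∈ A, ‖f i x‖ ≤ κ) ∧ LipschitzOnWith κ (f i) A) :
    ∃ (g : X → Y) (φ : ℕ → ℕ), AEStronglyMeasurable g (μ.restrict (⋃ m, K m)) ∧
      StrictMono φ ∧ ∀ m, TendstoInMeasure (μ.restrict (K m)) (fun j => f (φ j)) atTop g := by
  obtain ⟨φ, hφ, u, hu, hfu⟩ := exists_subseq_eventually_measure_le_dist_le hKmono hKb hKm hKμ hf
  obtain ⟨g, hg, hfg⟩ := exists_tendstoInMeasure_restrict_of_forall_eventually_measure_le hKμ hu
    (by simp [ENNReal.tsum_add, ENNReal.tsum_geometric]) hfu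
  exact ⟨g, φ, hg, hφ, hfg⟩

end LipschitzApproximation

theorem compactness_in_measure_general {n : ℕ} (U : Set (EuclideanSpace ℝ (Fin n))) (hU : IsOpen U)
    (μ : Measure (EuclideanSpace ℝ (Fin n)))
    (hrad : ∀ K : Set (EuclideanSpace ℝ (Fin n)), K ⊆ U → IsCompact K → μ K < ⊤)
    {Y : Type*} [NormedAddCommGroup Y] [NormedSpace ℝ Y] [FiniteDimensional ℝ Y]
    (f : ℕ → EuclideanSpace ℝ (Fin n) → Y)
    (happrox : ∀ X : Set (EuclideanSpace ℝ (Fin n)), MeasurableSet X → X ⊆ U → μ X < ⊤ →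
      ∀ ε : ENNReal, 0 < ε → ∃ κ : NNReal, ∀ i, ∃ A ⊆ X, μ (X \ A) ≤ ε ∧
        (∀ x ∈ A, ‖f i x‖ ≤ κ) ∧ LipschitzOnWith κ (f i) A) :
    ∃ (g : EuclideanSpace ℝ (Fin n) → Y) (φ : ℕ → ℕ),
      AEStronglyMeasurable g (μ.restrict U) ∧ StrictMono φ ∧
      ∀ K : Set (EuclideanSpace ℝ (Fin n)), K ⊆ U → IsCompact K → ∀ t : ℝ, 0 < t →
        Filter.Tendsto (fun j => μ (K ∩ {x | t < ‖f (φ j) x - g x‖}))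
          Filter.atTop (nhds 0) := by
  obtain ⟨K, hKc, hKU, hKmono, hKcover⟩ := hU.exists_compact_exhaustion
  have hKμ : ∀ m, μ (K m) < ⊤ := fun m => hrad _ (hKU m) (hKc m)
  have hUK : ⋃ m, K m = U := (iUnion_subset hKU).antisymm fun x hx =>
    mem_iUnion.2 <| (hKcover {x} (singleton_subset_iff.2 hx) isCompact_singleton).imp
      fun _ => singleton_subset_iff.1
  obtain ⟨g, φ, hg, hφ, hfg⟩ := exists_subseq_tendstoInMeasure_restrict hKmono
    (fun m => (hKc m).isBounded) (fun m => (hKc m).measurableSet) (fun m => (hKμ m).ne)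
    fun r => happrox _ (hKc r).measurableSet (hKU r) (hKμ r) _ (ENNReal.pow_pos (by norm_num) r)
  refine ⟨g, φ, hUK ▸ hg, hφ, fun C hCU hC t ht => ?_⟩
  obtain ⟨m, hCm⟩ := hKcover C hCU hC
  exact TendstoInMeasure.tendsto_measure_inter_lt_norm_sub (hfg m) hCm ht

/-- compactness criterion for local convergence in measure via uniform
approximability by uniformly bounded Lipschitz restrictions. -/
theorem compactness_in_measure {n : ℕ} (U : Set (EuclideanSpace ℝ (Fin n))) (hU : IsOpen U)
    (μ : Measure (EuclideanSpace ℝ (Fin n)))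
    (hrad : ∀ K : Set (EuclideanSpace ℝ (Fin n)), K ⊆ U → IsCompact K → μ K < ⊤)
    {Y : Type*} [NormedAddCommGroup Y] [NormedSpace ℝ Y] [FiniteDimensional ℝ Y]
    (f : ℕ → EuclideanSpace ℝ (Fin n) → Y)
    (hmeas : ∀ i, AEStronglyMeasurable (f i) (μ.restrict U))
    (happrox : ∀ X : Set (EuclideanSpace ℝ (Fin n)), MeasurableSet X → X ⊆ U → μ X < ⊤ →
      ∀ ε : ENNReal, 0 < ε → ∃ κ : NNReal, ∀ i, ∃ A ⊆ X, μ (X \ A) ≤ ε ∧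
        (∀ x ∈ A, ‖f i x‖ ≤ κ) ∧ LipschitzOnWith κ (f i) A) :
    ∃ (g : EuclideanSpace ℝ (Fin n) → Y) (φ : ℕ → ℕ),
      AEStronglyMeasurable g (μ.restrict U) ∧ StrictMono φ ∧
      ∀ K : Set (EuclideanSpace ℝ (Fin n)), K ⊆ U → IsCompact K → ∀ t : ℝ, 0 < t →
        Filter.Tendsto (fun j => μ (K ∩ {x | t < ‖f (φ j) x - g x‖}))
          Filter.atTop (nhds 0) :=
  compactness_in_measure_general U hU μ hrad f happrox
end

section
/- Suppose $X$ and $Y$ are normed vector spaces, $A \subset X$, $a \in A$, and $f : A \to Y$ is differentiable relative to $A$ at $a$ with relative derivative $Df(a)$ defined on the tangent cone $\mathrm{Tan}(A,a)$. Then $\sup\{|Df(a)(u)| : u \in \mathrm{Tan}(A,a), |u| = 1\} \leq \limsup_{x \to a,\, x \in A} |f(x)-f(a)|/|x-a|$, and equality holds if $X$ is finite dimensional. -/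
/-!
Since `g` is differentiable at `a`, along `x → a` in `A \ {a}` the difference quotient
`‖f x - f a‖ / ‖x - a‖` is asymptotic to `‖Dg(a) (normalize (x - a))‖`. The unit vectors of the
tangent cone are exactly the cluster points of the directions `normalize (x - a)`, so the limsup
dominates `‖Dg(a) u‖` for each of them. When the unit sphere is compact, the limsup is realised
along an ultrafilter on which the directions converge, to a unit tangent vector: equality.
-/

open Filter Topology NormedSpace

theorem limsup_comp_le_iSup_mapClusterPt {α β γ : Type*} [TopologicalSpace β]
    [CompleteLinearOrder γ] [TopologicalSpace γ] [OrderTopology γ]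
    {F : Filter α} {φ : α → β} {h : β → γ} {K : Set β}
    (hK : IsCompact K) (hφK : ∀ᶠ x in F, φ x ∈ K) (hh : Continuous h) :
    limsup (h ∘ φ) F ≤ ⨆ (u) (_ : MapClusterPt u F φ), h u := by
  rcases F.eq_or_neBot with rfl | hF
  · simp
  obtain ⟨U, hUF, hU⟩ :=
    mapClusterPt_iff_ultrafilter.1 (MapClusterPt.limsup (u := h ∘ φ) (f := F))
  obtain ⟨u, -, hu⟩ := hK.ultrafilter_le_nhds (U.map φ) (le_principal_iff.2 (hUF hφK))
  have hlimsup : h u = limsup (h ∘ φ) F := tendsto_nhds_unique ((hh.tendsto u).comp hu) hU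
  exact hlimsup ▸
    le_iSup₂ (f := fun u _ => h u) u (mapClusterPt_iff_ultrafilter.2 ⟨U, hUF, hu⟩)

theorem limsup_ofReal_le_of_tendsto_sub {α : Type*} {F : Filter α} {p q : α → ℝ}
    (hpq : Tendsto (fun x => p x - q x) F (𝓝 0)) :
    limsup (fun x => ENNReal.ofReal (p x)) F ≤ limsup (fun x => ENNReal.ofReal (q x)) F :=
  calc limsup (fun x => ENNReal.ofReal (p x)) F
      ≤ limsup ((fun x => ENNReal.ofReal (q x)) + fun x => ENNReal.ofReal (p x - q x)) F :=
        limsup_le_limsup (.of_forall fun x => by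
          simpa using ENNReal.ofReal_add_le (p := q x) (q := p x - q x))
    _ = limsup (fun x => ENNReal.ofReal (q x)) F :=
        ENNReal.limsup_add_of_right_tendsto_zero
          (by simpa using ENNReal.tendsto_ofReal hpq) _

theorem limsup_ofReal_eq_of_tendsto_sub {α : Type*} {F : Filter α} {p q : α → ℝ}
    (hpq : Tendsto (fun x => p x - q x) F (𝓝 0)) :
    limsup (fun x => ENNReal.ofReal (p x)) F = limsup (fun x => ENNReal.ofReal (q x)) F :=
  (limsup_ofReal_le_of_tendsto_sub hpq).antisymm
    (limsup_ofReal_le_of_tendsto_sub (by simpa using hpq.neg))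

section NormedSpace

variable {X Y : Type*} [NormedAddCommGroup X] [NormedSpace ℝ X]
  [NormedAddCommGroup Y] [NormedSpace ℝ Y]

theorem NormedSpace.continuousAt_normalize {u : X} (hu : u ≠ 0) : ContinuousAt normalize u :=
  (continuous_norm.continuousAt.inv₀ (norm_ne_zero_iff.2 hu)).smul continuousAt_id

theorem abs_norm_div_norm_sub_norm_normalize_le (L : X →L[ℝ] Y) (v : X) (y : Y) :
    |‖y‖ / ‖v‖ - ‖L (normalize v)‖| ≤ ‖v‖⁻¹ * ‖y - L v‖ := by
  have hLv : ‖L (normalize v)‖ = ‖v‖⁻¹ * ‖L v‖ := by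
    rw [NormedSpace.normalize, map_smul, norm_smul, norm_inv, norm_norm]
  rw [hLv, div_eq_inv_mul, ← mul_sub, abs_mul, abs_of_nonneg (inv_nonneg.2 (norm_nonneg v))]
  exact mul_le_mul_of_nonneg_left (abs_norm_sub_norm_le y (L v)) (inv_nonneg.2 (norm_nonneg v))

theorem tendsto_norm_div_norm_sub_norm_fderiv_normalize {A U : Set X} {a : X} {f g : X → Y}
    (ha : a ∈ A) (hU : U ∈ 𝓝 a) (hg : DifferentiableAt ℝ g a)
    (hfg : ∀ x ∈ A ∩ U, f x = g x) :
    Tendsto (fun x => ‖f x - f a‖ / ‖x - a‖ - ‖fderiv ℝ g a (normalize (x - a))‖)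
      (𝓝[A] a) (𝓝 0) := by
  have hrem := (hasFDerivAt_iff_tendsto.1 hg.hasFDerivAt).mono_left
    (nhdsWithin_le_nhds (s := A))
  refine squeeze_zero_norm' ?_ hrem
  filter_upwards [self_mem_nhdsWithin, mem_nhdsWithin_of_mem_nhds hU] with x hxA hxU
  rw [Real.norm_eq_abs, hfg x ⟨hxA, hxU⟩, hfg a ⟨ha, mem_of_mem_nhds hU⟩]
  exact abs_norm_div_norm_sub_norm_normalize_le _ _ _

theorem eventually_normalize_sub_mem_sphere (A : Set X) (a : X) :
    ∀ᶠ x in 𝓝[A \ {a}] a, normalize (x - a) ∈ Metric.sphere (0 : X) 1 := by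
  filter_upwards [self_mem_nhdsWithin] with x hx
  simpa [sub_eq_zero] using hx.2

/-- Federer's tangent cone `Tan(A, a)`. -/
def federerTangentCone (A : Set X) (a : X) : Set X :=
  {u | ∀ ε > (0 : ℝ), ∃ x ∈ A, ∃ r : ℝ, 0 < r ∧ ‖x - a‖ < ε ∧ ‖r • (x - a) - u‖ < ε}

theorem mem_federerTangentCone_and_norm_eq_one_iff {A : Set X} {a u : X} :
    u ∈ federerTangentCone A a ∧ ‖u‖ = 1 ↔
      MapClusterPt u (𝓝[A \ {a}] a) (fun x => normalize (x - a)) := by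
  constructor
  · rintro ⟨hu, hu1⟩
    rw [mapClusterPt_iff_frequently]
    intro s hs
    have hu0 : u ≠ 0 := norm_ne_zero_iff.1 (by rw [hu1]; exact one_ne_zero)
    obtain ⟨δ, hδ, hδs⟩ := Metric.mem_nhds_iff.1 <| continuousAt_normalize hu0 <| by
      rwa [normalize_eq_self_of_norm_eq_one hu1]
    rw [frequently_nhdsWithin_iff, Metric.nhds_basis_ball.frequently_iff]
    intro ε hε
    obtain ⟨x, hxA, r, hr, hxa, hru⟩ := hu (min ε (min δ 1)) (by positivity)
    have hx_ne : x ≠ a := by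
      rintro rfl
      simp only [sub_self, smul_zero, zero_sub, norm_neg, hu1] at hru
      exact (hru.trans_le ((min_le_right _ _).trans (min_le_right _ _))).false
    refine ⟨x, by simpa [dist_eq_norm] using hxa.trans_le (min_le_left _ _), ?_, hxA, hx_ne⟩
    rw [← normalize_smul_of_pos hr]
    exact hδs <| by
      simpa [dist_eq_norm] using hru.trans_le ((min_le_right _ _).trans (min_le_left _ _))
  · intro hu
    refine ⟨fun ε hε => ?_, by
      simpa using
        Metric.isClosed_sphere.mem_of_mapClusterPt hu (eventually_normalize_sub_mem_sphere A a)⟩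
    have hnear : ∀ᶠ x in 𝓝[A \ {a}] a, x ∈ Metric.ball a ε :=
      mem_nhdsWithin_of_mem_nhds (Metric.ball_mem_nhds a hε)
    obtain ⟨x, hdir, hxa, hxA, hx_ne⟩ :=
      ((hu.frequently (Metric.ball_mem_nhds u hε)).and_eventually
        (hnear.and self_mem_nhdsWithin)).exists
    exact ⟨x, hxA, ‖x - a‖⁻¹, inv_pos.2 (norm_pos_iff.2 (sub_ne_zero.2 hx_ne)),
      by simpa [dist_eq_norm] using hxa, by simpa [dist_eq_norm, NormedSpace.normalize] using hdir⟩

end NormedSpace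

/-- `g` is a local differentiable extension of `f`, so that `Df(a) = Dg(a)|Tan(A,a)`. -/
theorem relative_differential_sup_eq_limsup {X Y : Type*}
    [NormedAddCommGroup X] [NormedSpace ℝ X] [NormedAddCommGroup Y] [NormedSpace ℝ Y]
    (A : Set X) (a : X) (ha : a ∈ A) (f g : X → Y) (U : Set X)
    (hU : U ∈ nhds a) (hg : DifferentiableAt ℝ g a)
    (hfg : ∀ x ∈ A ∩ U, f x = g x)
    (T : Set X)
    (hT : T = {u | ∀ ε > (0 : ℝ), ∃ x ∈ A, ∃ r : ℝ,
      0 < r ∧ ‖x - a‖ < ε ∧ ‖r • (x - a) - u‖ < ε}) :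
    (⨆ u : {u : X // u ∈ T ∧ ‖u‖ = 1}, ENNReal.ofReal ‖fderiv ℝ g a u.1‖) ≤
      Filter.limsup (fun x => ENNReal.ofReal (‖f x - f a‖ / ‖x - a‖))
        (nhdsWithin a (A \ {a})) ∧
    (FiniteDimensional ℝ X →
      (⨆ u : {u : X // u ∈ T ∧ ‖u‖ = 1}, ENNReal.ofReal ‖fderiv ℝ g a u.1‖) =
        Filter.limsup (fun x => ENNReal.ofReal (‖f x - f a‖ / ‖x - a‖))
          (nhdsWithin a (A \ {a}))) := by
  change T = federerTangentCone A a at hT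
  subst hT
  set h : X → ENNReal := fun v => ENNReal.ofReal ‖fderiv ℝ g a v‖
  have hh : Continuous h := ENNReal.continuous_ofReal.comp (fderiv ℝ g a).continuous.norm
  have hlimsup : limsup (fun x => ENNReal.ofReal (‖f x - f a‖ / ‖x - a‖)) (𝓝[A \ {a}] a) =
      limsup (h ∘ fun x => normalize (x - a)) (𝓝[A \ {a}] a) :=
    limsup_ofReal_eq_of_tendsto_sub <|
      (tendsto_norm_div_norm_sub_norm_fderiv_normalize ha hU hg hfg).mono_left
        (nhdsWithin_mono a Set.sdiff_subset)
  have hle : (⨆ u : {u : X // u ∈ federerTangentCone A a ∧ ‖u‖ = 1}, h u.1) ≤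
      limsup (h ∘ fun x => normalize (x - a)) (𝓝[A \ {a}] a) :=
    iSup_le fun ⟨u, hu⟩ =>
      ((mem_federerTangentCone_and_norm_eq_one_iff.1 hu).continuousAt_comp
        hh.continuousAt).le_limsup
  refine ⟨hlimsup ▸ hle, fun _ => hlimsup ▸ hle.antisymm ?_⟩
  calc limsup (h ∘ fun x => normalize (x - a)) (𝓝[A \ {a}] a)
      ≤ ⨆ (u) (_ : MapClusterPt u (𝓝[A \ {a}] a) fun x => normalize (x - a)), h u :=
        limsup_comp_le_iSup_mapClusterPt (isCompact_sphere 0 1)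
          (eventually_normalize_sub_mem_sphere A a) hh
    _ ≤ _ := iSup₂_le fun u hu =>
        le_iSup (fun u : {u : X // u ∈ federerTangentCone A a ∧ ‖u‖ = 1} => h u.1)
          ⟨u, mem_federerTangentCone_and_norm_eq_one_iff.2 hu⟩
end

section
/- Suppose $Y$ is a boundedly compact metric space metrised by $\tau$, $X$ is a dense subset of $Y$, and for $0 < \delta \leq \infty$ let $\sigma_\delta(a,x)$ be the infimum of sums $\sum_{i=1}^j \tau(x_i, x_{i-1})$ over finite chains $x_0 = a, x_1, \ldots, x_j = x$ in $X$ with each $\tau(x_i, x_{i-1}) \leq \delta$, and let $\sigma(a,x) = \lim_{\delta \to 0+} \sigma_\delta(a,x)$. Then $\sigma$ is a pseudometric on $X$, and whenever $a,x \in X$ with $\sigma(a,x) < \infty$ there exists a map $g : \mathbf{R} \to Y$ satisfying $g(0) = a$, $g(\sigma(a,x)) = x$, and $\mathrm{Lip}\, g \leq 1$. -/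
/-!
Reversing and concatenating `δ`-chains shows that each `σ_δ` is a pseudometric, and these
properties pass to the supremum `σ`. For the path, pick `δₙ`-chains from `a` to `x` with
`δₙ → 0` whose lengths tend to `σ(a, x)`. Parametrising each chain by arc length gives a
piecewise constant map `ℝ → Y` that is `1`-Lipschitz up to an error `δₙ`; since closed balls are
compact, these maps have a pointwise limit along an ultrafilter, which is `1`-Lipschitz and runs
from `a` at time `0` to `x` at time `σ(a, x)`.
-/

open Filter Topology Finset
open scoped ENNReal

noncomputable section

variable {Y : Type*}

def chainAppend (c : ℕ → Y) (j : ℕ) (d : ℕ → Y) : ℕ → Y :=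
  fun i => if i ≤ j then c i else d (i - j)

theorem chainAppend_of_le {c d : ℕ → Y} {j : ℕ} (hcd : c j = d 0) {i : ℕ} (hi : j ≤ i) :
    chainAppend c j d i = d (i - j) := by
  rcases hi.eq_or_lt with rfl | hi
  · simp [chainAppend, hcd]
  · simp [chainAppend, hi.not_ge]

variable [PseudoEMetricSpace Y]

def chainLength (c : ℕ → Y) (j : ℕ) : ℝ≥0∞ :=
  ∑ i ∈ range j, edist (c i) (c (i + 1))

structure IsDeltaChain (X : Set Y) (δ : ℝ≥0∞) (a x : Y) (j : ℕ) (c : ℕ → Y) : Prop where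
  start : c 0 = a
  finish : c j = x
  mem : ∀ i ≤ j, c i ∈ X
  edist_le : ∀ i < j, edist (c i) (c (i + 1)) ≤ δ

variable {X : Set Y} {δ δ' r : ℝ≥0∞} {a x z : Y} {j k : ℕ} {c d : ℕ → Y}

theorem chainLength_reverse : chainLength (fun i => c (j - i)) j = chainLength c j := by
  rw [chainLength, ← sum_range_reflect]
  refine sum_congr rfl fun i hi => ?_
  have hi : i < j := mem_range.1 hi
  rw [show j - (j - 1 - i) = i + 1 by omega, show j - (j - 1 - i + 1) = i by omega, edist_comm]

theorem chainLength_chainAppend (hcd : c j = d 0) :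
    chainLength (chainAppend c j d) (j + k) = chainLength c j + chainLength d k := by
  rw [chainLength, sum_range_add]
  congr 1
  · refine sum_congr rfl fun i hi => ?_
    have hi : i < j := mem_range.1 hi
    simp [chainAppend, hi.le, Nat.succ_le_of_lt hi]
  · refine sum_congr rfl fun i _ => ?_
    rw [chainAppend_of_le hcd (by omega), chainAppend_of_le hcd (by omega),
      show j + i + 1 - j = i + 1 by omega, Nat.add_sub_cancel_left]

namespace IsDeltaChain

theorem refl (ha : a ∈ X) : IsDeltaChain X δ a a 0 fun _ => a :=
  ⟨rfl, rfl, fun _ _ => ha, fun _ hi => absurd hi (Nat.not_lt_zero _)⟩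

theorem mono (h : IsDeltaChain X δ a x j c) (hδ : δ ≤ δ') : IsDeltaChain X δ' a x j c :=
  ⟨h.start, h.finish, h.mem, fun i hi => (h.edist_le i hi).trans hδ⟩

theorem reverse (h : IsDeltaChain X δ a x j c) : IsDeltaChain X δ x a j fun i => c (j - i) where
  start := by simpa using h.finish
  finish := by simpa using h.start
  mem i _ := h.mem _ (Nat.sub_le j i)
  edist_le i hi := by
    rw [edist_comm, show j - i = j - (i + 1) + 1 by omega]
    exact h.edist_le _ (by omega)

theorem append (h₁ : IsDeltaChain X δ a x j c) (h₂ : IsDeltaChain X δ x z k d) :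
    IsDeltaChain X δ a z (j + k) (chainAppend c j d) where
  start := by simp [chainAppend, h₁.start]
  finish := by
    rw [chainAppend_of_le (h₁.finish.trans h₂.start.symm) (by omega), Nat.add_sub_cancel_left,
      h₂.finish]
  mem i hi := by
    by_cases hij : i ≤ j
    · simpa [chainAppend, hij] using h₁.mem i hij
    · simpa [chainAppend, hij] using h₂.mem (i - j) (by omega)
  edist_le i hi := by
    have hcd := h₁.finish.trans h₂.start.symm
    by_cases hij : i < j
    · simpa [chainAppend, hij.le, Nat.succ_le_of_lt hij] using h₁.edist_le i hij
    · rw [chainAppend_of_le hcd (by omega), chainAppend_of_le hcd (by omega),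
        show i + 1 - j = i - j + 1 by omega]
      exact h₂.edist_le _ (by omega)

end IsDeltaChain

/-- Spelled with nested binders rather than with `IsDeltaChain`, so that it is definitionally the
`σ_δ` of the statement. -/
def chainDist (X : Set Y) (δ : ℝ≥0∞) (a x : Y) : ℝ≥0∞ :=
  ⨅ (j : ℕ) (c : ℕ → Y) (_ : c 0 = a) (_ : c j = x) (_ : ∀ i ≤ j, c i ∈ X)
    (_ : ∀ i < j, edist (c i) (c (i + 1)) ≤ δ), chainLength c j

theorem IsDeltaChain.chainDist_le (h : IsDeltaChain X δ a x j c) :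
    chainDist X δ a x ≤ chainLength c j :=
  iInf_le_of_le j <| iInf_le_of_le c <| iInf_le_of_le h.start <| iInf_le_of_le h.finish <|
    iInf_le_of_le h.mem <| iInf_le _ h.edist_le

theorem le_chainDist (h : ∀ j c, IsDeltaChain X δ a x j c → r ≤ chainLength c j) :
    r ≤ chainDist X δ a x := by
  simp only [chainDist, le_iInf_iff]
  exact fun j c h0 hj hmem hstep => h j c ⟨h0, hj, hmem, hstep⟩

theorem exists_isDeltaChain_chainLength_lt (h : chainDist X δ a x < r) :
    ∃ j c, IsDeltaChain X δ a x j c ∧ chainLength c j < r := by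
  simp only [chainDist, iInf_lt_iff] at h
  obtain ⟨j, c, h0, hj, hmem, hstep, hlt⟩ := h
  exact ⟨j, c, ⟨h0, hj, hmem, hstep⟩, hlt⟩

theorem chainDist_self (ha : a ∈ X) : chainDist X δ a a = 0 :=
  nonpos_iff_eq_zero.1 <| (IsDeltaChain.refl ha).chainDist_le.trans_eq (by simp [chainLength])

theorem chainDist_comm_le : chainDist X δ x a ≤ chainDist X δ a x :=
  le_chainDist fun _ _ h => h.reverse.chainDist_le.trans_eq chainLength_reverse

theorem chainDist_comm : chainDist X δ a x = chainDist X δ x a :=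
  le_antisymm chainDist_comm_le chainDist_comm_le

theorem chainDist_triangle : chainDist X δ a z ≤ chainDist X δ a x + chainDist X δ x z := by
  simp only [chainDist, ENNReal.iInf_add, ENNReal.add_iInf, le_iInf_iff]
  intro k d h0' hk hmem' hstep' j c h0 hj hmem hstep
  have h₁ : IsDeltaChain X δ a x j c := ⟨h0, hj, hmem, hstep⟩
  have h₂ : IsDeltaChain X δ x z k d := ⟨h0', hk, hmem', hstep'⟩
  exact (h₁.append h₂).chainDist_le.trans_eq
    (chainLength_chainAppend (h₁.finish.trans h₂.start.symm))

theorem chainDist_antitone : Antitone fun δ => chainDist X δ a x :=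
  fun _ _ hδ => le_chainDist fun _ _ h => (h.mono hδ).chainDist_le

def chainPseudometric (X : Set Y) (a x : Y) : ℝ≥0∞ :=
  ⨆ (δ : ℝ≥0∞) (_ : 0 < δ), chainDist X δ a x

theorem chainDist_le_chainPseudometric (hδ : 0 < δ) :
    chainDist X δ a x ≤ chainPseudometric X a x :=
  le_iSup₂ (f := fun δ (_ : 0 < δ) => chainDist X δ a x) δ hδ

theorem chainPseudometric_self (ha : a ∈ X) : chainPseudometric X a a = 0 := by
  simp [chainPseudometric, chainDist_self ha]

theorem chainPseudometric_comm : chainPseudometric X a x = chainPseudometric X x a := by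
  simp only [chainPseudometric, chainDist_comm (a := a)]

theorem chainPseudometric_triangle :
    chainPseudometric X a z ≤ chainPseudometric X a x + chainPseudometric X x z :=
  iSup₂_le fun _ hδ => chainDist_triangle.trans <|
    add_le_add (chainDist_le_chainPseudometric hδ) (chainDist_le_chainPseudometric hδ)

theorem tendsto_chainDist_nhdsGT_zero :
    Tendsto (fun δ => chainDist X δ a x) (𝓝[>] 0) (𝓝 (chainPseudometric X a x)) := by
  convert chainDist_antitone.tendsto_nhdsGT 0 using 2
  rw [sSup_image', chainPseudometric, iSup_subtype']; rfl

theorem exists_isDeltaChain_tendsto_chainPseudometric (hfin : chainPseudometric X a x ≠ ⊤)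
    {δ : ℕ → ℝ≥0∞} (hδ0 : ∀ n, 0 < δ n) (hδ : Tendsto δ atTop (𝓝 0)) :
    ∃ (j : ℕ → ℕ) (c : ℕ → ℕ → Y), (∀ n, IsDeltaChain X (δ n) a x (j n) (c n)) ∧
      Tendsto (fun n => chainLength (c n) (j n)) atTop (𝓝 (chainPseudometric X a x)) := by
  have hdist : Tendsto (fun n => chainDist X (δ n) a x) atTop (𝓝 (chainPseudometric X a x)) :=
    tendsto_chainDist_nhdsGT_zero.comp
      (tendsto_nhdsWithin_iff.2 ⟨hδ, Eventually.of_forall hδ0⟩)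
  have hchain : ∀ n, ∃ j c, IsDeltaChain X (δ n) a x j c ∧
      chainLength c j < chainDist X (δ n) a x + δ n := fun n =>
    exists_isDeltaChain_chainLength_lt <| ENNReal.lt_add_right
      (ne_top_of_le_ne_top hfin (chainDist_le_chainPseudometric (hδ0 n))) (hδ0 n).ne'
  choose j c hc hlt using hchain
  refine ⟨j, c, hc, tendsto_of_tendsto_of_tendsto_of_le_of_le hdist ?_
    (fun n => (hc n).chainDist_le) (fun n => (hlt n).le)⟩
  simpa using hdist.add hδ

end

noncomputable section ChainPath

variable {Y : Type*} [MetricSpace Y] (c : ℕ → Y) (j : ℕ)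

def arcLength (i : ℕ) : ℝ :=
  ∑ m ∈ range i, dist (c m) (c (m + 1))

def chainIndex (t : ℝ) : ℕ :=
  Nat.findGreatest (fun i => arcLength c i ≤ t) j

/-- The piecewise constant path through the chain, staying at `c i` for times in
`[arcLength c i, arcLength c (i + 1))`. -/
def chainPath (t : ℝ) : Y :=
  c (chainIndex c j t)

variable {c j}

@[simp]
theorem arcLength_zero : arcLength c 0 = 0 := by simp [arcLength]

theorem arcLength_succ (i : ℕ) : arcLength c (i + 1) = arcLength c i + dist (c i) (c (i + 1)) :=
  sum_range_succ _ _

theorem arcLength_nonneg (i : ℕ) : 0 ≤ arcLength c i :=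
  sum_nonneg fun _ _ => dist_nonneg

theorem dist_le_arcLength_sub {i k : ℕ} (h : i ≤ k) :
    dist (c i) (c k) ≤ arcLength c k - arcLength c i :=
  (dist_le_Ico_sum_dist c h).trans_eq (sum_Ico_eq_sub _ h)

theorem chainLength_eq_ofReal_arcLength : chainLength c j = ENNReal.ofReal (arcLength c j) := by
  simp only [chainLength, arcLength, edist_dist]
  exact (ENNReal.ofReal_sum_of_nonneg fun _ _ => dist_nonneg).symm

theorem chainIndex_le (t : ℝ) : chainIndex c j t ≤ j :=
  Nat.findGreatest_le j

theorem chainIndex_mono : Monotone (chainIndex c j) :=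
  fun _ _ hst => Nat.findGreatest_mono (fun _ h => h.trans hst) le_rfl

theorem chainIndex_of_neg {t : ℝ} (ht : t < 0) : chainIndex c j t = 0 :=
  Nat.findGreatest_eq_zero_iff.2 fun _ _ _ h => (arcLength_nonneg _).not_gt (h.trans_lt ht)

theorem arcLength_chainIndex_le {t : ℝ} (ht : 0 ≤ t) : arcLength c (chainIndex c j t) ≤ t :=
  Nat.findGreatest_spec (P := fun i => arcLength c i ≤ t) (Nat.zero_le j) (by simpa using ht)

theorem lt_arcLength_chainIndex_succ {t : ℝ} (h : chainIndex c j t < j) :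
    t < arcLength c (chainIndex c j t + 1) :=
  not_le.1 (Nat.findGreatest_is_greatest (Nat.lt_succ_self _) h)

theorem chainIndex_arcLength : chainIndex c j (arcLength c j) = j :=
  le_antisymm (chainIndex_le _) (Nat.le_findGreatest le_rfl le_rfl)

theorem arcLength_chainIndex_sub_le {ε s t : ℝ} (hε0 : 0 ≤ ε)
    (hε : ∀ i < j, dist (c i) (c (i + 1)) ≤ ε) (hst : s ≤ t) :
    arcLength c (chainIndex c j t) - arcLength c (chainIndex c j s) ≤ t - s + ε := by
  rcases lt_or_ge s 0 with hs | hs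
  · rw [chainIndex_of_neg hs, arcLength_zero, sub_zero]
    rcases lt_or_ge t 0 with ht | ht
    · rw [chainIndex_of_neg ht, arcLength_zero]
      linarith
    · linarith [arcLength_chainIndex_le (c := c) (j := j) ht]
  have ht : arcLength c (chainIndex c j t) ≤ t := arcLength_chainIndex_le (hs.trans hst)
  rcases (chainIndex_le (c := c) s).lt_or_eq with hlt | heq
  · have hstep := arcLength_succ (c := c) (chainIndex c j s)
    linarith [lt_arcLength_chainIndex_succ hlt, hε _ hlt]
  · have : chainIndex c j t = chainIndex c j s :=
      le_antisymm ((chainIndex_le t).trans heq.ge) (chainIndex_mono hst)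
    rw [this, sub_self]
    linarith

theorem dist_chainPath_le {ε : ℝ} (hε0 : 0 ≤ ε) (hε : ∀ i < j, dist (c i) (c (i + 1)) ≤ ε)
    (s t : ℝ) : dist (chainPath c j s) (chainPath c j t) ≤ dist s t + ε := by
  wlog hst : s ≤ t generalizing s t
  · rw [dist_comm, dist_comm s]
    exact this t s (le_of_not_ge hst)
  calc dist (chainPath c j s) (chainPath c j t)
      ≤ arcLength c (chainIndex c j t) - arcLength c (chainIndex c j s) :=
        dist_le_arcLength_sub (chainIndex_mono hst)
    _ ≤ t - s + ε := arcLength_chainIndex_sub_le hε0 hε hst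
    _ = dist s t + ε := by rw [Real.dist_eq, abs_sub_comm, abs_of_nonneg (sub_nonneg.2 hst)]

theorem chainPath_zero : chainPath c j 0 = c 0 :=
  (dist_le_zero.1 <| (dist_le_arcLength_sub (Nat.zero_le _)).trans <| by
    simpa using arcLength_chainIndex_le (c := c) (j := j) le_rfl).symm

theorem chainPath_arcLength : chainPath c j (arcLength c j) = c j := by
  rw [chainPath, chainIndex_arcLength]

end ChainPath

section Limit

variable {Y : Type*} [MetricSpace Y] [ProperSpace Y]

theorem exists_lipschitzWith_one_limit {f : ℕ → ℝ → Y} {ε : ℕ → ℝ}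
    (hε : Tendsto ε atTop (𝓝 0)) (hf : ∀ n s t, dist (f n s) (f n t) ≤ dist s t + ε n)
    {a : Y} (ha : Tendsto (fun n => f n 0) atTop (𝓝 a)) :
    ∃ g : ℝ → Y, LipschitzWith 1 g ∧
      ∀ t y, Tendsto (fun n => f n t) atTop (𝓝 y) → g t = y := by
  let F : Ultrafilter ℕ := Ultrafilter.of atTop
  have hF : (F : Filter ℕ) ≤ atTop := Ultrafilter.of_le atTop
  have hlim : ∀ t, ∃ y, Tendsto (fun n => f n t) F (𝓝 y) := by
    intro t
    have hball : ∀ᶠ n in atTop, f n t ∈ Metric.closedBall a (|t| + 2) := by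
      filter_upwards [hε.eventually (gt_mem_nhds one_pos),
        ha.eventually (Metric.ball_mem_nhds a one_pos)] with n hεn han
      rw [Metric.mem_closedBall]
      calc dist (f n t) a ≤ dist (f n t) (f n 0) + dist (f n 0) a := dist_triangle _ _ _
        _ ≤ (dist t 0 + ε n) + 1 := add_le_add (hf n t 0) (Metric.mem_ball.1 han).le
        _ ≤ |t| + 2 := by rw [Real.dist_0_eq_abs]; linarith
    obtain ⟨y, -, hy⟩ := (isCompact_closedBall a (|t| + 2)).ultrafilter_le_nhds
      (F.map fun n => f n t) (le_principal_iff.2 (hF hball))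
    exact ⟨y, hy⟩
  choose g hg using hlim
  refine ⟨g, LipschitzWith.mk_one fun s t => ?_,
    fun t y hy => tendsto_nhds_unique (hg t) (hy.mono_left hF)⟩
  have hbound := (hε.const_add (dist s t)).mono_left hF
  rw [add_zero] at hbound
  exact le_of_tendsto_of_tendsto' ((hg s).dist (hg t)) hbound fun n => hf n s t

theorem exists_lipschitzWith_one_of_chains {c : ℕ → ℕ → Y} {j : ℕ → ℕ} {ε : ℕ → ℝ} {L : ℝ}
    {a x : Y} (hε0 : ∀ n, 0 ≤ ε n) (hε : Tendsto ε atTop (𝓝 0))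
    (hstep : ∀ n, ∀ i < j n, dist (c n i) (c n (i + 1)) ≤ ε n)
    (hL : Tendsto (fun n => arcLength (c n) (j n)) atTop (𝓝 L))
    (h0 : ∀ n, c n 0 = a) (hj : ∀ n, c n (j n) = x) :
    ∃ g : ℝ → Y, g 0 = a ∧ g L = x ∧ LipschitzWith 1 g := by
  have hf n := dist_chainPath_le (hε0 n) (hstep n)
  have hf0 : ∀ n, chainPath (c n) (j n) 0 = a := fun n => chainPath_zero.trans (h0 n)
  have hfa : Tendsto (fun n => chainPath (c n) (j n) 0) atTop (𝓝 a) := by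
    simp only [hf0]
    exact tendsto_const_nhds
  obtain ⟨g, hg, hlim⟩ := exists_lipschitzWith_one_limit hε hf hfa
  refine ⟨g, hlim 0 a hfa, hlim L x ?_, hg⟩
  have hdist : ∀ n, dist (chainPath (c n) (j n) L) x ≤ dist L (arcLength (c n) (j n)) + ε n :=
    fun n => by simpa [chainPath_arcLength, hj] using hf n L (arcLength (c n) (j n))
  have hlim0 : Tendsto (fun n => dist L (arcLength (c n) (j n)) + ε n) atTop (𝓝 0) := by
    simpa using ((tendsto_const_nhds (x := L)).dist hL).add hε
  exact tendsto_iff_dist_tendsto_zero.2 (squeeze_zero (fun _ => dist_nonneg) hdist hlim0)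

end Limit

theorem chain_pseudometric_path_general {Y : Type*} [MetricSpace Y] [ProperSpace Y]
    (X : Set Y)
    (σδ : ENNReal → Y → Y → ENNReal)
    (hσδ : ∀ δ a x, σδ δ a x =
      ⨅ (j : ℕ) (c : ℕ → Y) (_ : c 0 = a) (_ : c j = x) (_ : ∀ i ≤ j, c i ∈ X)
        (_ : ∀ i < j, edist (c i) (c (i + 1)) ≤ δ),
        ∑ i ∈ Finset.range j, edist (c i) (c (i + 1)))
    (σ : Y → Y → ENNReal)
    (hσ : ∀ a x, σ a x = ⨆ (δ : ENNReal) (_ : 0 < δ), σδ δ a x) :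
    (∀ a ∈ X, σ a a = 0) ∧
    (∀ a ∈ X, ∀ x ∈ X, σ a x = σ x a) ∧
    (∀ a ∈ X, ∀ x ∈ X, ∀ c ∈ X, σ a c ≤ σ a x + σ x c) ∧
    (∀ a ∈ X, ∀ x ∈ X, σ a x ≠ ⊤ →
      ∃ g : ℝ → Y, g 0 = a ∧ g ((σ a x).toReal) = x ∧ LipschitzWith 1 g) := by
  obtain rfl : σδ = chainDist X := funext fun δ => funext fun a => funext fun x => hσδ δ a x
  obtain rfl : σ = chainPseudometric X := funext fun a => funext fun x => hσ a x
  refine ⟨fun a ha => chainPseudometric_self ha, fun a _ x _ => chainPseudometric_comm,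
    fun a _ x _ z _ => chainPseudometric_triangle, fun a _ x _ hfin => ?_⟩
  have hε0' : ∀ n : ℕ, 0 < 1 / ((n : ℝ) + 1) := fun n => by positivity
  have hε0 : ∀ n : ℕ, 0 ≤ 1 / ((n : ℝ) + 1) := fun n => (hε0' n).le
  obtain ⟨j, c, hc, hlen⟩ := exists_isDeltaChain_tendsto_chainPseudometric hfin
    (δ := fun n => ENNReal.ofReal (1 / ((n : ℝ) + 1))) (fun n => ENNReal.ofReal_pos.2 (hε0' n))
    (by simpa using ENNReal.tendsto_ofReal tendsto_one_div_add_atTop_nhds_zero_nat)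
  refine exists_lipschitzWith_one_of_chains hε0 tendsto_one_div_add_atTop_nhds_zero_nat
    (fun n i hi => (edist_le_ofReal (hε0 n)).1 ((hc n).edist_le i hi)) ?_
    (fun n => (hc n).start) (fun n => (hc n).finish)
  simpa [Function.comp_def, chainLength_eq_ofReal_arcLength, arcLength_nonneg] using
    (ENNReal.tendsto_toReal hfin).comp hlen

/-- the chain pseudometrics `σ_δ` on a dense subset `X` of a boundedly compact
metric space `Y` converge, as `δ → 0+` (equivalently, as a supremum over `δ > 0`), to a
pseudometric `σ` on `X`; and whenever `σ a x < ∞` there is a `1`-Lipschitz path in `Y` from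
`a` to `x` parametrised on `[0, σ a x]`. -/
theorem chain_pseudometric_path {Y : Type*} [MetricSpace Y] [ProperSpace Y]
    (X : Set Y) (hX : Dense X)
    (σδ : ENNReal → Y → Y → ENNReal)
    (hσδ : ∀ δ a x, σδ δ a x =
      ⨅ (j : ℕ) (c : ℕ → Y) (_ : c 0 = a) (_ : c j = x) (_ : ∀ i ≤ j, c i ∈ X)
        (_ : ∀ i < j, edist (c i) (c (i + 1)) ≤ δ),
        ∑ i ∈ Finset.range j, edist (c i) (c (i + 1)))
    (σ : Y → Y → ENNReal)
    (hσ : ∀ a x, σ a x = ⨆ (δ : ENNReal) (_ : 0 < δ), σδ δ a x) :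
    (∀ a ∈ X, σ a a = 0) ∧
    (∀ a ∈ X, ∀ x ∈ X, σ a x = σ x a) ∧
    (∀ a ∈ X, ∀ x ∈ X, ∀ c ∈ X, σ a c ≤ σ a x + σ x c) ∧
    (∀ a ∈ X, ∀ x ∈ X, σ a x ≠ ⊤ →
      ∃ g : ℝ → Y, g 0 = a ∧ g ((σ a x).toReal) = x ∧ LipschitzWith 1 g) :=
  chain_pseudometric_path_general X σδ hσδ σ hσ
end

section
/- Suppose $X$ is a metric space, $\varrho$ is the intrinsic pseudometric on $X$ given by infima of lengths of continuous paths in $X$, $A_i$ is a sequence of open subsets of $X$ with compact closure satisfying $\overline{A_i} \subset A_{i+1}$ and $X = \bigcup_i A_i$, and $\varrho_i$ is the pseudometric on $A_i$ given by infima of lengths of continuous paths with values in $\overline{A_i}$ connecting points of $A_i$. Then $\varrho_{i+1}(a,x) \leq \varrho_i(a,x)$ whenever $a,x \in A_i$, and $\varrho_i(a,x) \to \varrho(a,x)$ as $i \to \infty$ for all $a,x \in X$. -/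
/-!
Enlarging the admissible region of paths can only lower the infimum of lengths, which gives the
monotonicity. Conversely, a path from `a` to `x` has compact image, which by openness and
nestedness of the `A i` lies in a single `A N`; clamping the path to its parameter interval
keeps it inside `closure (A N)` without changing its length, so `ρ_N a x` is at most that
length. Hence `ρ a x` is the infimum, and so the limit, of the nonincreasing sequence `ρ_i a x`.
-/

open Set

section

variable {X : Type*} [PseudoEMetricSpace X]

noncomputable def pathEDistIn (S : Set X) (a x : X) : ENNReal :=
  ⨅ (g : ℝ → X) (_ : Continuous g) (_ : ∀ t, g t ∈ S) (s : ℝ) (t : ℝ) (_ : s ≤ t)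
    (_ : g s = a) (_ : g t = x), eVariationOn g (Icc s t)

theorem pathEDistIn_univ (a x : X) :
    pathEDistIn univ a x = ⨅ (g : ℝ → X) (_ : Continuous g) (s : ℝ) (t : ℝ) (_ : s ≤ t)
      (_ : g s = a) (_ : g t = x), eVariationOn g (Icc s t) := by
  simp only [pathEDistIn, mem_univ, implies_true, iInf_pos]

theorem pathEDistIn_anti {S T : Set X} (hST : S ⊆ T) (a x : X) :
    pathEDistIn T a x ≤ pathEDistIn S a x := by
  unfold pathEDistIn
  exact iInf₂_mono fun g _ => le_iInf fun hgS => iInf_le_of_le (fun t => hST (hgS t)) le_rfl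

theorem pathEDistIn_le_of_mapsTo {S : Set X} {g : ℝ → X} {s t : ℝ} (hst : s ≤ t)
    (hg : ContinuousOn g (Icc s t)) (hgS : MapsTo g (Icc s t) S) {a x : X} (ha : g s = a)
    (hx : g t = x) : pathEDistIn S a x ≤ eVariationOn g (Icc s t) := by
  set clamp : ℝ → ℝ := fun u => projIcc s t hst u
  have hclamp_mem : ∀ u, clamp u ∈ Icc s t := fun u => (projIcc s t hst u).2
  have hcont : Continuous (g ∘ clamp) :=
    hg.comp_continuous (continuous_subtype_val.comp continuous_projIcc) hclamp_mem
  have heq : EqOn (g ∘ clamp) g (Icc s t) := fun u hu => by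
    simp only [clamp, Function.comp_apply, projIcc_of_mem hst hu]
  calc pathEDistIn S a x ≤ eVariationOn (g ∘ clamp) (Icc s t) :=
        iInf_le_of_le _ <| iInf_le_of_le hcont <| iInf_le_of_le (fun u => hgS (hclamp_mem u)) <|
          iInf_le_of_le s <| iInf_le_of_le t <| iInf_le_of_le hst <|
          iInf_le_of_le (by simpa [clamp] using ha) <| iInf_le_of_le (by simpa [clamp] using hx)
          le_rfl
    _ = eVariationOn g (Icc s t) := eVariationOn.eq_of_eqOn heq

theorem iInf_pathEDistIn_of_directed {ι : Type*} [Nonempty ι] {A : ι → Set X}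
    (hopen : ∀ i, IsOpen (A i)) (hdir : Directed (· ⊆ ·) A) (hcover : ⋃ i, A i = univ)
    (a x : X) : ⨅ i, pathEDistIn (A i) a x = pathEDistIn univ a x := by
  refine le_antisymm ?_ (le_iInf fun i => pathEDistIn_anti (subset_univ _) a x)
  rw [pathEDistIn_univ]
  refine le_iInf fun g => le_iInf fun hg => le_iInf fun s => le_iInf fun t =>
    le_iInf fun hst => le_iInf fun ha => le_iInf fun hx => ?_
  obtain ⟨N, hN⟩ := (isCompact_Icc.image hg).elim_directed_cover A hopen
    (hcover ▸ subset_univ _) hdir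
  exact iInf_le_of_le N <|
    pathEDistIn_le_of_mapsTo hst hg.continuousOn (image_subset_iff.mp hN) ha hx

end

theorem intrinsic_metric_exhaustion_general {X : Type*} [MetricSpace X]
    (ρ : X → X → ENNReal)
    (hρ : ∀ a x, ρ a x = ⨅ (g : ℝ → X) (_ : Continuous g) (s : ℝ) (t : ℝ) (_ : s ≤ t)
      (_ : g s = a) (_ : g t = x), eVariationOn g (Set.Icc s t))
    (A : ℕ → Set X) (hopen : ∀ i, IsOpen (A i))
    (hmono : ∀ i, closure (A i) ⊆ A (i + 1)) (hcover : (⋃ i, A i) = Set.univ)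
    (ρi : ℕ → X → X → ENNReal)
    (hρi : ∀ i a x, ρi i a x = ⨅ (g : ℝ → X) (_ : Continuous g)
      (_ : ∀ t, g t ∈ closure (A i)) (s : ℝ) (t : ℝ) (_ : s ≤ t) (_ : g s = a) (_ : g t = x),
      eVariationOn g (Set.Icc s t)) :
    (∀ i, ∀ a ∈ A i, ∀ x ∈ A i, ρi (i + 1) a x ≤ ρi i a x) ∧
    (∀ a x, Filter.Tendsto (fun i => ρi i a x) Filter.atTop (nhds (ρ a x))) := by
  have hρ' : ρ = pathEDistIn univ := by ext a x; rw [hρ, pathEDistIn_univ]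
  have hρi' : ρi = fun i => pathEDistIn (closure (A i)) := by ext i a x; exact hρi i a x
  subst hρ' hρi'
  have hA : Monotone A := monotone_nat_of_le_succ fun i => subset_closure.trans (hmono i)
  have hstep : ∀ i a x, pathEDistIn (closure (A (i + 1))) a x ≤ pathEDistIn (closure (A i)) a x :=
    fun i => pathEDistIn_anti ((hmono i).trans subset_closure)
  refine ⟨fun i a _ x _ => hstep i a x, fun a x => ?_⟩
  have hlim : ⨅ i, pathEDistIn (closure (A i)) a x = pathEDistIn univ a x :=
    le_antisymm
      ((iInf_mono fun i => pathEDistIn_anti subset_closure a x).trans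
        (iInf_pathEDistIn_of_directed hopen hA.directed_le hcover a x).le)
      (le_iInf fun i => pathEDistIn_anti (subset_univ _) a x)
  exact hlim ▸ tendsto_atTop_iInf (antitone_nat_of_succ_le fun i => hstep i a x)

/-- for an exhaustion `A i` of `X` by open sets with compact closures, the
intrinsic pseudometrics `ρ_i` obtained from paths with values in `closure (A i)` are
nonincreasing in `i` on `A i × A i` and converge pointwise to the intrinsic pseudometric
`ρ` of `X`. -/
theorem intrinsic_metric_exhaustion {X : Type*} [MetricSpace X]
    (ρ : X → X → ENNReal)
    (hρ : ∀ a x, ρ a x = ⨅ (g : ℝ → X) (_ : Continuous g) (s : ℝ) (t : ℝ) (_ : s ≤ t)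
      (_ : g s = a) (_ : g t = x), eVariationOn g (Set.Icc s t))
    (A : ℕ → Set X) (hopen : ∀ i, IsOpen (A i)) (hcpt : ∀ i, IsCompact (closure (A i)))
    (hmono : ∀ i, closure (A i) ⊆ A (i + 1)) (hcover : (⋃ i, A i) = Set.univ)
    (ρi : ℕ → X → X → ENNReal)
    (hρi : ∀ i a x, ρi i a x = ⨅ (g : ℝ → X) (_ : Continuous g)
      (_ : ∀ t, g t ∈ closure (A i)) (s : ℝ) (t : ℝ) (_ : s ≤ t) (_ : g s = a) (_ : g t = x),
      eVariationOn g (Set.Icc s t)) :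
    (∀ i, ∀ a ∈ A i, ∀ x ∈ A i, ρi (i + 1) a x ≤ ρi i a x) ∧
    (∀ a x, Filter.Tendsto (fun i => ρi i a x) Filter.atTop (nhds (ρ a x))) :=
  intrinsic_metric_exhaustion_general ρ hρ A hopen hmono hcover ρi hρi
end
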